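/- Analytic KL divergence from Gamma to Weibull: for k > 0, λ > 0, α > 0, β > 0, KL( Weibull(k, λ) || Gamma(α, β) ) = (γα)/k − α log λ + log k + βλ Γ(1 + 1/k) − γ − 1 − α log β + log Γ(α), where γ is the Euler–Mascheroni constant and Γ is the gamma function. -/

import Mathlib

/-! The substitution `x = lam * u ^ (1 / k)` carries the Weibull law to the standard exponential
law, and turns the log-likelihood ratio into
`c + (k - a) / k * log u + b * lam * u ^ (1 / k) - u` for a constant `c`. Its expectation then only
involves the exponential moments `E[1] = E[U] = 1`, `E[U ^ (1 / k)] = Γ(1 + 1 / k)` and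
`E[log U] = Γ'(1) = -γ`. -/

open MeasureTheory Real Set

/-- The Weibull density with shape `k > 0` and scale `lam > 0`, supported on `(0, ∞)`. -/
noncomputable def weibullPDF (k lam : ℝ) (x : ℝ) : ℝ :=
  if 0 < x then (k / lam ^ k) * x ^ (k - 1) * Real.exp (-(x / lam) ^ k) else 0

/-- The Gamma density with shape `a > 0` and rate `b > 0`, supported on `(0, ∞)`. -/
noncomputable def gammaPDF' (a b : ℝ) (x : ℝ) : ℝ :=
  if 0 < x then (b ^ a / Real.Gamma a) * x ^ (a - 1) * Real.exp (-(b * x)) else 0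

lemma abs_log_le_rpow_add_rpow_neg {x ε : ℝ} (hx : 0 < x) (hε : 0 < ε) :
    |log x| ≤ (x ^ ε + x ^ (-ε)) / ε := by
  have hpos : log x ≤ x ^ ε / ε := log_le_rpow_div hx.le hε
  have hneg : -log x ≤ x ^ (-ε) / ε := by
    simpa [log_inv, inv_rpow hx.le, rpow_neg hx.le] using log_le_rpow_div (inv_pos.2 hx).le hε
  have : 0 ≤ x ^ ε / ε := by positivity
  have : 0 ≤ x ^ (-ε) / ε := by positivity
  rw [abs_le, add_div]
  constructor <;> linarith

lemma integrableOn_exp_neg_mul_rpow {s : ℝ} (hs : -1 < s) :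
    IntegrableOn (fun x => exp (-x) * x ^ s) (Ioi 0) := by
  simpa using GammaIntegral_convergent (s := s + 1) (by linarith)

lemma integral_exp_neg_mul_rpow_eq_Gamma {s : ℝ} (hs : -1 < s) :
    ∫ x in Ioi (0 : ℝ), exp (-x) * x ^ s = Gamma (s + 1) := by
  simp [Gamma_eq_integral (s := s + 1) (by linarith)]

lemma integrableOn_exp_neg_mul_log : IntegrableOn (fun x => exp (-x) * log x) (Ioi 0) := by
  have hε : (0 : ℝ) < 1 / 2 := by norm_num
  refine Integrable.mono' (((integrableOn_exp_neg_mul_rpow (s := 1 / 2) (by norm_num)).add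
    (integrableOn_exp_neg_mul_rpow (s := -(1 / 2)) (by norm_num))).div_const (1 / 2))
    (by fun_prop) ?_
  filter_upwards [ae_restrict_mem measurableSet_Ioi] with x hx
  rw [norm_mul, norm_of_nonneg (exp_pos _).le, norm_eq_abs, Pi.add_apply, ← mul_add,
    mul_div_assoc]
  exact mul_le_mul_of_nonneg_left (abs_log_le_rpow_add_rpow_neg hx hε) (exp_pos _).le

lemma integral_exp_neg_mul_log :
    ∫ x in Ioi (0 : ℝ), exp (-x) * log x = -eulerMascheroniConstant := by
  have hΓ : Complex.Gamma =ᶠ[nhds 1] Complex.GammaIntegral := by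
    filter_upwards [(isOpen_lt continuous_const Complex.continuous_re).mem_nhds
      (by norm_num : (0 : ℝ) < (1 : ℂ).re)] with s hs
    exact Complex.Gamma_eq_integral hs
  have hderiv := ((Complex.hasDerivAt_GammaIntegral (by norm_num)).congr_of_eventuallyEq hΓ).unique
    Complex.hasDerivAt_Gamma_one
  have : ∫ x in Ioi (0 : ℝ), (x : ℂ) ^ ((1 : ℂ) - 1) * (log x * exp (-x))
      = ((∫ x in Ioi (0 : ℝ), exp (-x) * log x : ℝ) : ℂ) := by
    rw [← integral_complex_ofReal]
    refine setIntegral_congr_fun measurableSet_Ioi fun x _ => ?_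
    push_cast
    simp [mul_comm]
  exact_mod_cast this ▸ hderiv

lemma mul_weibullPDF_mul {k lam y : ℝ} (hlam : 0 < lam) (hy : 0 < y) :
    lam * weibullPDF k lam (lam * y) = k * y ^ (k - 1) * exp (-y ^ k) := by
  rw [weibullPDF, if_pos (mul_pos hlam hy), mul_div_cancel_left₀ _ hlam.ne',
    mul_rpow hlam.le hy.le, rpow_sub_one hlam.ne']
  field_simp

lemma setIntegral_weibullPDF_mul (f : ℝ → ℝ) {k lam : ℝ} (hk : 0 < k) (hlam : 0 < lam) :
    ∫ x in Ioi 0, weibullPDF k lam x * f x =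
      ∫ u in Ioi 0, exp (-u) * f (lam * u ^ (1 / k)) := by
  calc ∫ x in Ioi 0, weibullPDF k lam x * f x
      = ∫ y in Ioi 0, lam * (weibullPDF k lam (lam * y) * f (lam * y)) := by
        rw [integral_const_mul, ← smul_eq_mul,
          integral_comp_mul_left_Ioi' (fun x => weibullPDF k lam x * f x) 0 hlam, mul_zero]
    _ = ∫ y in Ioi 0, (k * y ^ (k - 1)) • (exp (-y ^ k) * f (lam * (y ^ k) ^ (1 / k))) := by
        refine setIntegral_congr_fun measurableSet_Ioi fun y (hy : 0 < y) => ?_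
        rw [← mul_assoc, mul_weibullPDF_mul hlam hy, ← rpow_mul hy.le,
          mul_one_div_cancel hk.ne', rpow_one, smul_eq_mul]
        ring
    _ = ∫ u in Ioi 0, exp (-u) * f (lam * u ^ (1 / k)) :=
        integral_comp_rpow_Ioi_of_pos (g := fun u => exp (-u) * f (lam * u ^ (1 / k))) hk

lemma log_weibullPDF {k lam x : ℝ} (hk : 0 < k) (hlam : 0 < lam) (hx : 0 < x) :
    log (weibullPDF k lam x) = log k - k * log lam + (k - 1) * log x - (x / lam) ^ k := by
  rw [weibullPDF, if_pos hx, log_mul (by positivity) (by positivity),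
    log_mul (by positivity) (by positivity), log_div hk.ne' (by positivity), log_rpow hlam,
    log_rpow hx, log_exp]
  ring

lemma log_gammaPDF' {a b x : ℝ} (ha : 0 < a) (hb : 0 < b) (hx : 0 < x) :
    log (gammaPDF' a b x) = a * log b - log (Gamma a) + (a - 1) * log x - b * x := by
  have hΓ := Gamma_pos_of_pos ha
  rw [gammaPDF', if_pos hx, log_mul (by positivity) (by positivity),
    log_mul (by positivity) (by positivity), log_div (by positivity) (by positivity), log_rpow hb,
    log_rpow hx, log_exp]
  ring

lemma integral_exp_neg_mul_const_add_log_add_rpow_sub_self (c p q : ℝ) {s : ℝ} (hs : -1 < s) :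
    ∫ u in Ioi (0 : ℝ), exp (-u) * (c + p * log u + q * u ^ s - u)
      = c - p * eulerMascheroniConstant + q * Gamma (s + 1) - 1 := by
  have hc := (integrableOn_exp_neg_mul_rpow (s := 0) (by norm_num)).const_mul c
  have hlog := integrableOn_exp_neg_mul_log.const_mul p
  have hq := (integrableOn_exp_neg_mul_rpow hs).const_mul q
  have h1 := integrableOn_exp_neg_mul_rpow (s := 1) (by norm_num)
  calc ∫ u in Ioi (0 : ℝ), exp (-u) * (c + p * log u + q * u ^ s - u)
      = ∫ u in Ioi (0 : ℝ), c * (exp (-u) * u ^ (0 : ℝ)) + p * (exp (-u) * log u)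
          + q * (exp (-u) * u ^ s) - exp (-u) * u ^ (1 : ℝ) := by
        congr 1
        funext u
        simp only [rpow_zero, rpow_one]
        ring
    _ = c - p * eulerMascheroniConstant + q * Gamma (s + 1) - 1 := by
        rw [integral_sub (by exact (hc.add hlog).add hq) h1, integral_add (by exact hc.add hlog) hq,
          integral_add hc hlog,
          integral_const_mul, integral_const_mul, integral_const_mul, integral_exp_neg_mul_log,
          integral_exp_neg_mul_rpow_eq_Gamma hs, integral_exp_neg_mul_rpow_eq_Gamma (by norm_num),
          integral_exp_neg_mul_rpow_eq_Gamma (by norm_num), zero_add, Gamma_one,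
          one_add_one_eq_two, Gamma_two]
        ring

/-- Analytic KL divergence from a Gamma distribution to a Weibull distribution. -/
theorem kl_weibull_gamma (k lam a b : ℝ) (hk : 0 < k) (hlam : 0 < lam)
    (ha : 0 < a) (hb : 0 < b) :
    ∫ x in Ioi (0 : ℝ),
        weibullPDF k lam x * (Real.log (weibullPDF k lam x) - Real.log (gammaPDF' a b x))
      = Real.eulerMascheroniConstant * a / k - a * Real.log lam + Real.log k
          + b * lam * Real.Gamma (1 + 1 / k) - Real.eulerMascheroniConstant - 1
          - a * Real.log b + Real.log (Real.Gamma a) := by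
  rw [setIntegral_weibullPDF_mul _ hk hlam]
  calc ∫ u in Ioi 0, exp (-u) * (log (weibullPDF k lam (lam * u ^ (1 / k)))
          - log (gammaPDF' a b (lam * u ^ (1 / k))))
      = ∫ u in Ioi 0, exp (-u) * ((log k - a * log lam - a * log b + log (Gamma a))
          + (k - a) / k * log u + b * lam * u ^ (1 / k) - u) := by
        refine setIntegral_congr_fun measurableSet_Ioi fun u (hu : 0 < u) => ?_
        have hx : 0 < lam * u ^ (1 / k) := by positivity
        rw [log_weibullPDF hk hlam hx, log_gammaPDF' ha hb hx, mul_div_cancel_left₀ _ hlam.ne',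
          ← rpow_mul hu.le, one_div_mul_cancel hk.ne', rpow_one, log_mul hlam.ne' (by positivity),
          log_rpow hu]
        field_simp
        ring
    _ = _ := by
        have hs : -1 < 1 / k := by linarith [one_div_pos.2 hk]
        rw [integral_exp_neg_mul_const_add_log_add_rpow_sub_self _ _ _ hs, add_comm (1 / k)]
        field_simp
        ring
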